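/- arXiv:2105.05026 — 5 statements merged into one kernel-verified Lean document; each statement's English description precedes it below -/
import Mathlib

section
/- Let c ≥ 2 and let α, β⁺, β⁻: {−1,+1}^c → (0,∞) be positive penalty functions. Suppose Condition (C) holds: for every probability distribution P on {−1,+1}^c and all 1 ≤ p < q ≤ c, if Δ_p^+(P)Δ_q^-(P) − Δ_p^-(P)Δ_q^+(P) > 0 then φ_p^+(P)φ_q^-(P) − φ_p^-(P)φ_q^+(P) > 0, and if Δ_p^+(P)Δ_q^-(P) − Δ_p^-(P)Δ_q^+(P) < 0 then φ_p^+(P)φ_q^-(P) − φ_p^-(P)φ_q^+(P) < 0. Then there exists τ > 0 such that β⁺(y)·β⁻(y) = τ·α(y)² for every nontrivial y ∈ {−1,+1}^c. -/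
/-!
Put masses `a, b` on two labelings `y, z` that disagree at labels `p, q` in opposite ways.
Both determinants of Condition (C) become binary quadratic forms,
`Δ = α(y)² a² - α(z)² b²` and `φ = γ(y) a² - γ(z) b²` with `γ = β⁺β⁻`.
Choosing `a, b` with `φ = 0`, Condition (C) forces `Δ = 0`, so `γ / α²` takes the same value at
`y` and `z`. Any two nontrivial labelings are linked by such pairs, directly or through the
complement of one of them.
-/

open scoped BigOperators

/-- The set of positive-label indices of `y ∈ {-1,+1}^c` (encoded as `Fin c → Bool`,
with `true ↦ +1` and `false ↦ -1`). -/
def Sp {c : ℕ} (y : Fin c → Bool) : Finset (Fin c) :=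
  Finset.univ.filter (fun j => y j = true)

/-- The set of negative-label indices. -/
def Sm {c : ℕ} (y : Fin c → Bool) : Finset (Fin c) :=
  Finset.univ.filter (fun j => y j = false)

/-- `φ_j^+(P) = Σ_{y : y_j = +1} β(y) P(y)` (also used for `Δ_j^+` with `β = α`). -/
def phiP {c : ℕ} (β P : (Fin c → Bool) → ℝ) (j : Fin c) : ℝ :=
  ∑ y ∈ Finset.univ.filter (fun y : Fin c → Bool => y j = true), β y * P y

/-- `φ_j^-(P) = Σ_{y : y_j = -1} β(y) P(y)` (also used for `Δ_j^-` with `β = α`). -/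
def phiM {c : ℕ} (β P : (Fin c → Bool) → ℝ) (j : Fin c) : ℝ :=
  ∑ y ∈ Finset.univ.filter (fun y : Fin c → Bool => y j = false), β y * P y


def crossDet {c : ℕ} (β₁ β₂ P : (Fin c → Bool) → ℝ) (p q : Fin c) : ℝ :=
  phiP β₁ P p * phiM β₂ P q - phiM β₂ P p * phiP β₁ P q

def ConditionC {c : ℕ} (α βp βm : (Fin c → Bool) → ℝ) : Prop :=
  ∀ P : (Fin c → Bool) → ℝ, (∀ y, 0 ≤ P y) → (∑ y, P y) = 1 →
    ∀ p q : Fin c, p < q →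
      (0 < crossDet α α P p q → 0 < crossDet βp βm P p q) ∧
      (crossDet α α P p q < 0 → crossDet βp βm P p q < 0)

def Separates {c : ℕ} (u v : Fin c → Bool) : Prop :=
  ∃ p q, u p = true ∧ v p = false ∧ u q = false ∧ v q = true

section TwoPoint

variable {c : ℕ} (β : (Fin c → Bool) → ℝ) (y z : Fin c → Bool) (a b : ℝ) (j : Fin c)

lemma sum_single_add_single :
    ∑ x, (Pi.single y a + Pi.single z b : (Fin c → Bool) → ℝ) x = a + b := by
  simp [Finset.sum_add_distrib]

lemma phiP_single_add_single :
    phiP β (Pi.single y a + Pi.single z b) j =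
      (if y j = true then β y * a else 0) + (if z j = true then β z * b else 0) := by
  simp [phiP, mul_add, Finset.sum_add_distrib, Pi.single_apply]

lemma phiM_single_add_single :
    phiM β (Pi.single y a + Pi.single z b) j =
      (if y j = false then β y * a else 0) + (if z j = false then β z * b else 0) := by
  simp [phiM, mul_add, Finset.sum_add_distrib, Pi.single_apply]

lemma crossDet_single_add_single (β₁ β₂ : (Fin c → Bool) → ℝ) {p q : Fin c}
    (hyp : y p = true) (hzp : z p = false) (hyq : y q = false) (hzq : z q = true) :
    crossDet β₁ β₂ (Pi.single y a + Pi.single z b) p q =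
      β₁ y * β₂ y * a ^ 2 - β₁ z * β₂ z * b ^ 2 := by
  simp only [crossDet, phiP_single_add_single, phiM_single_add_single, hyp, hzp, hyq, hzq]
  simp only [if_true, if_false, Bool.false_eq_true, Bool.true_eq_false]
  ring

end TwoPoint

lemma exists_add_eq_one_mul_sq_eq {u v : ℝ} (hu : 0 < u) (hv : 0 < v) :
    ∃ a b : ℝ, 0 ≤ a ∧ 0 < b ∧ a + b = 1 ∧ u * a ^ 2 = v * b ^ 2 := by
  have hs : 0 < √u + √v := by positivity
  refine ⟨√v / (√u + √v), √u / (√u + √v), by positivity, by positivity, ?_, ?_⟩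
  · field_simp
    ring
  · rw [div_pow, div_pow, Real.sq_sqrt hu.le, Real.sq_sqrt hv.le]
    ring

section Consistency

variable {c : ℕ} {α βp βm : (Fin c → Bool) → ℝ}

lemma crossDet_eq_zero_of_conditionC (hC : ConditionC α βp βm) {P : (Fin c → Bool) → ℝ}
    (hP : ∀ y, 0 ≤ P y) (hP1 : ∑ y, P y = 1) {p q : Fin c} (hpq : p < q)
    (hβ : crossDet βp βm P p q = 0) : crossDet α α P p q = 0 := by
  obtain ⟨hpos, hneg⟩ := hC P hP hP1 p q hpq
  rcases lt_trichotomy (crossDet α α P p q) 0 with h | h | h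
  · exact absurd (hneg h) (by rw [hβ]; exact lt_irrefl 0)
  · exact h
  · exact absurd (hpos h) (by rw [hβ]; exact lt_irrefl 0)

lemma mul_sq_eq_of_conditionC_of_lt (hC : ConditionC α βp βm)
    (hβp : ∀ y, 0 < βp y) (hβm : ∀ y, 0 < βm y) {y z : Fin c → Bool} {p q : Fin c}
    (hpq : p < q) (hyp : y p = true) (hzp : z p = false) (hyq : y q = false)
    (hzq : z q = true) :
    βp y * βm y * α z ^ 2 = βp z * βm z * α y ^ 2 := by
  obtain ⟨a, b, ha, hb, hab, hγ⟩ :=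
    exists_add_eq_one_mul_sq_eq (mul_pos (hβp y) (hβm y)) (mul_pos (hβp z) (hβm z))
  have hP : ∀ x, 0 ≤ (Pi.single y a + Pi.single z b : (Fin c → Bool) → ℝ) x := fun x => by
    simp only [Pi.add_apply, Pi.single_apply]
    split_ifs <;> positivity
  have hα := crossDet_eq_zero_of_conditionC hC hP (by rw [sum_single_add_single, hab]) hpq
    (by rw [crossDet_single_add_single _ _ _ _ _ _ hyp hzp hyq hzq, hγ, sub_self])
  rw [crossDet_single_add_single _ _ _ _ _ _ hyp hzp hyq hzq, sub_eq_zero] at hα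
  refine mul_right_cancel₀ (pow_ne_zero 2 hb.ne') ?_
  linear_combination α y ^ 2 * hγ - βp y * βm y * hα

lemma div_sq_eq_of_conditionC (hC : ConditionC α βp βm) (hα : ∀ y, 0 < α y)
    (hβp : ∀ y, 0 < βp y) (hβm : ∀ y, 0 < βm y) {y z : Fin c → Bool} (hyz : Separates y z) :
    βp y * βm y / α y ^ 2 = βp z * βm z / α z ^ 2 := by
  obtain ⟨p, q, hyp, hzp, hyq, hzq⟩ := hyz
  rw [div_eq_div_iff (pow_pos (hα y) 2).ne' (pow_pos (hα z) 2).ne']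
  rcases lt_or_gt_of_ne (show p ≠ q by rintro rfl; simp_all) with hpq | hqp
  · exact mul_sq_eq_of_conditionC_of_lt hC hβp hβm hpq hyp hzp hyq hzq
  · exact (mul_sq_eq_of_conditionC_of_lt hC hβp hβm hqp hzq hyq hzp hyp).symm

end Consistency

section Separation

variable {c : ℕ} {α βp βm : (Fin c → Bool) → ℝ} {u v : Fin c → Bool}

lemma separates_not (hu : ∃ i, u i = true) (hu' : ∃ i, u i = false) :
    Separates u (fun j => !u j) := by
  obtain ⟨p, hp⟩ := hu
  obtain ⟨q, hq⟩ := hu'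
  exact ⟨p, q, hp, by simp [hp], hq, by simp [hq]⟩

lemma separates_or_separates_not (hu : ∃ i, u i = true) (hu' : ∃ i, u i = false)
    (hv : ∃ i, v i = true) (hv' : ∃ i, v i = false) :
    Separates u v ∨ Separates (fun j => !u j) v := by
  obtain ⟨r, hr⟩ := hu
  obtain ⟨s, hs⟩ := hu'
  obtain ⟨p, hp⟩ := hv
  obtain ⟨q, hq⟩ := hv'
  unfold Separates
  grind

lemma div_sq_eq_of_conditionC_of_nontrivial (hC : ConditionC α βp βm) (hα : ∀ y, 0 < α y)
    (hβp : ∀ y, 0 < βp y) (hβm : ∀ y, 0 < βm y) {u v : Fin c → Bool}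
    (hu : ∃ i, u i = true) (hu' : ∃ i, u i = false)
    (hv : ∃ i, v i = true) (hv' : ∃ i, v i = false) :
    βp u * βm u / α u ^ 2 = βp v * βm v / α v ^ 2 := by
  rcases separates_or_separates_not hu hu' hv hv' with h | h
  · exact div_sq_eq_of_conditionC hC hα hβp hβm h
  · exact (div_sq_eq_of_conditionC hC hα hβp hβm (separates_not hu hu')).trans
      (div_sq_eq_of_conditionC hC hα hβp hβm h)

end Separation

theorem stmt8 (c : ℕ) (hc : 2 ≤ c)
    (α βp βm : (Fin c → Bool) → ℝ)
    (hα : ∀ y, 0 < α y) (hβp : ∀ y, 0 < βp y) (hβm : ∀ y, 0 < βm y)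
    (hC : ∀ P : (Fin c → Bool) → ℝ, (∀ y, 0 ≤ P y) → (∑ y, P y) = 1 →
      ∀ p q : Fin c, p < q →
        (0 < phiP α P p * phiM α P q - phiM α P p * phiP α P q →
          0 < phiP βp P p * phiM βm P q - phiM βm P p * phiP βp P q) ∧
        (phiP α P p * phiM α P q - phiM α P p * phiP α P q < 0 →
          phiP βp P p * phiM βm P q - phiM βm P p * phiP βp P q < 0)) :
    ∃ τ : ℝ, 0 < τ ∧ ∀ y : Fin c → Bool,
      (Sp y).Nonempty → (Sm y).Nonempty → βp y * βm y = τ * (α y) ^ 2 := by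
  let y₀ : Fin c → Bool := fun j => decide (j.val = 0)
  have hy₀ : (∃ i, y₀ i = true) ∧ ∃ i, y₀ i = false :=
    ⟨⟨⟨0, by omega⟩, by simp [y₀]⟩, ⟨⟨1, by omega⟩, by simp [y₀]⟩⟩
  refine ⟨βp y₀ * βm y₀ / α y₀ ^ 2, div_pos (mul_pos (hβp y₀) (hβm y₀)) (pow_pos (hα y₀) 2),
    fun y hy hy' => ?_⟩
  obtain ⟨p, hp⟩ := hy
  obtain ⟨q, hq⟩ := hy'
  simp only [Sp, Sm, Finset.mem_filter, Finset.mem_univ, true_and] at hp hq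
  rw [← div_sq_eq_of_conditionC_of_nontrivial hC hα hβp hβm ⟨p, hp⟩ ⟨q, hq⟩ hy₀.1 hy₀.2,
    div_mul_cancel₀ _ (pow_pos (hα y) 2).ne']
end

section
/- Let c ≥ 2 and let α, β⁺, β⁻: {−1,+1}^c → (0,∞) be positive penalty functions. Then the following are equivalent: (i) Condition (C): for every probability distribution P on {−1,+1}^c and all 1 ≤ p < q ≤ c, if Δ_p^+(P)Δ_q^-(P) − Δ_p^-(P)Δ_q^+(P) > 0 then φ_p^+(P)φ_q^-(P) − φ_p^-(P)φ_q^+(P) > 0, and if Δ_p^+(P)Δ_q^-(P) − Δ_p^-(P)Δ_q^+(P) < 0 then φ_p^+(P)φ_q^-(P) − φ_p^-(P)φ_q^+(P) < 0; (ii) for every probability distribution P on {−1,+1}^c, every global minimizer over ℝ^c of the conditional surrogate risk f ↦ Σ_y P(y)·L_u(f,y) with base loss ℓ(z) = (max{0, 1−z})² is also a global minimizer over ℝ^c of the conditional general partial ranking risk f ↦ Σ_y P(y)·L_gpr(f,y). -/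
open scoped BigOperators

/-- The sign value of a Boolean label: `true ↦ +1`, `false ↦ -1`. -/
def toSign (b : Bool) : ℝ := if b then 1 else -1

/-- The general reweighted univariate surrogate loss `L_u`. -/
noncomputable def Lu {c : ℕ} (βp βm : (Fin c → Bool) → ℝ) (ℓ : ℝ → ℝ)
    (v : Fin c → ℝ) (y : Fin c → Bool) : ℝ :=
  ∑ j, (if y j then βp y else βm y) * ℓ (toSign (y j) * v j)

/-- The general partial ranking loss `L_gpr`. -/
noncomputable def Lgpr {c : ℕ} (α : (Fin c → Bool) → ℝ) (v : Fin c → ℝ)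
    (y : Fin c → Bool) : ℝ :=
  α y * ∑ p ∈ Sp y, ∑ q ∈ Sm y,
    ((if v p < v q then (1 : ℝ) else 0) + (1 / 2) * (if v p = v q then (1 : ℝ) else 0))

/-- The conditional surrogate risk. -/
noncomputable def riskU {c : ℕ} (βp βm : (Fin c → Bool) → ℝ) (ℓ : ℝ → ℝ)
    (P : (Fin c → Bool) → ℝ) (f : Fin c → ℝ) : ℝ :=
  ∑ y, P y * Lu βp βm ℓ f y

/-- The conditional general partial ranking risk. -/
noncomputable def riskGpr {c : ℕ} (α : (Fin c → Bool) → ℝ)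
    (P : (Fin c → Bool) → ℝ) (f : Fin c → ℝ) : ℝ :=
  ∑ y, P y * Lgpr α f y

/-!
The surrogate risk splits over coordinates: coordinate `j` contributes
`a ℓ(t) + b ℓ(-t)` with `a = φ_j^+(P)`, `b = φ_j^-(P)`. For the squared hinge loss this is
convex and differentiable, so its minimizers are the `t` with `a (1 - t)₊ = b (1 + t)₊`; one of
them is `(a - b) / (a + b)`, and minimizers for two weight pairs are strictly ordered like the
sign of `a_p b_q - b_p a_q`, i.e. of `φ_p^+ φ_q^- - φ_p^- φ_q^+`.

Since `1[u < v] + ½ 1[u = v]` and its swap add up to `1`, symmetrizing the ranking risk leaves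
`Σ_{p,q} (Δ_p^+ - Δ_q^+) (1[f_p < f_q] + ½ 1[f_p = f_q])` plus a constant, so `f` minimizes it
iff `f_q < f_p` whenever `Δ_q^+ < Δ_p^+`. Finally
`Δ_p^+ Δ_q^- - Δ_p^- Δ_q^+ = (Σ_y α(y) P(y)) (Δ_p^+ - Δ_q^+)`, so condition (C) says that the
surrogate minimizers are ordered like `Δ^+`, which is exactly the ranking consistency.
-/

open Finset

lemma sum_mul_pos {ι : Type*} [Fintype ι] {β P : ι → ℝ} (hβ : ∀ y, 0 < β y)
    (hP : ∀ y, 0 ≤ P y) (hP₁ : ∑ y, P y = 1) : 0 < ∑ y, β y * P y := by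
  obtain ⟨y, -, hy⟩ :=
    exists_lt_of_sum_lt (s := univ) (f := fun _ => (0 : ℝ)) (g := P) (by simp [hP₁])
  exact sum_pos' (fun y _ => mul_nonneg (hβ y).le (hP y)) ⟨y, mem_univ y, mul_pos (hβ y) hy⟩

lemma forall_sum_apply_le_iff {ι : Type*} [Fintype ι] [DecidableEq ι] (F : ι → ℝ → ℝ)
    (f : ι → ℝ) :
    (∀ g : ι → ℝ, ∑ j, F j (f j) ≤ ∑ j, F j (g j)) ↔ ∀ j s, F j (f j) ≤ F j s := by
  refine ⟨fun h j s => ?_, fun h g => sum_le_sum fun j _ => h j (g j)⟩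
  by_contra! hlt
  refine (h (Function.update f j s)).not_gt
    (sum_lt_sum (fun k _ => ?_) ⟨j, mem_univ j, by simpa⟩)
  rcases eq_or_ne k j with rfl | hk
  · simpa using hlt.le
  · simp [hk]

noncomputable def hinge (z : ℝ) : ℝ := max 0 (1 - z)

lemma hinge_nonneg (z : ℝ) : 0 ≤ hinge z := le_max_left _ _

lemma hinge_antitone : Antitone hinge := fun _ _ h => max_le_max le_rfl (by linarith)

lemma two_le_hinge_add_hinge_neg (z : ℝ) : 2 ≤ hinge z + hinge (-z) := by
  unfold hinge; linarith [le_max_right 0 (1 - z), le_max_right 0 (1 - -z)]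

lemma hinge_sq_add_le (s d : ℝ) :
    hinge (s + d) ^ 2 ≤ hinge s ^ 2 - 2 * d * hinge s + d ^ 2 := by
  unfold hinge
  rcases le_total s 1 with hs | hs
  · rw [max_eq_right (by linarith : 0 ≤ 1 - s)]
    rcases le_total (s + d) 1 with h | h
    · rw [max_eq_right (by linarith)]; nlinarith
    · rw [max_eq_left (by linarith)]; nlinarith
  · rw [max_eq_left (by linarith : 1 - s ≤ 0)]
    rcases le_total (s + d) 1 with h | h
    · rw [max_eq_right (by linarith)]; nlinarith
    · rw [max_eq_left (by linarith)]; nlinarith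

lemma hinge_sq_sub_le (s d : ℝ) : hinge s ^ 2 - 2 * d * hinge s ≤ hinge (s + d) ^ 2 := by
  unfold hinge
  rcases le_total s 1 with hs | hs
  · rw [max_eq_right (by linarith : 0 ≤ 1 - s)]
    rcases le_total (s + d) 1 with h | h
    · rw [max_eq_right (by linarith)]; nlinarith [sq_nonneg d]
    · rw [max_eq_left (by linarith)]; nlinarith
  · rw [max_eq_left (by linarith : 1 - s ≤ 0)]
    nlinarith [sq_nonneg (max 0 (1 - (s + d)))]

noncomputable def hingeRisk (a b t : ℝ) : ℝ := a * hinge t ^ 2 + b * hinge (-t) ^ 2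

section hingeRisk

variable {a b t : ℝ}

lemma hingeRisk_add_le (ha : 0 ≤ a) (hb : 0 ≤ b) (d : ℝ) :
    hingeRisk a b (t + d) ≤
      hingeRisk a b t - 2 * d * (a * hinge t - b * hinge (-t)) + (a + b) * d ^ 2 := by
  have h₁ := mul_le_mul_of_nonneg_left (hinge_sq_add_le t d) ha
  have h₂ := mul_le_mul_of_nonneg_left (hinge_sq_add_le (-t) (-d)) hb
  rw [← neg_add] at h₂
  unfold hingeRisk
  linarith

lemma hingeRisk_sub_le (ha : 0 ≤ a) (hb : 0 ≤ b) (d : ℝ) :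
    hingeRisk a b t - 2 * d * (a * hinge t - b * hinge (-t)) ≤ hingeRisk a b (t + d) := by
  have h₁ := mul_le_mul_of_nonneg_left (hinge_sq_sub_le t d) ha
  have h₂ := mul_le_mul_of_nonneg_left (hinge_sq_sub_le (-t) (-d)) hb
  rw [← neg_add] at h₂
  unfold hingeRisk
  linarith

/-- The bracket `a hinge t - b hinge (-t)` is minus half the derivative; testing the step
`t + bracket / (a + b)` in `hingeRisk_add_le` forces it to vanish. -/
lemma hinge_balance_of_isMin (ha : 0 ≤ a) (hb : 0 ≤ b) (hab : 0 < a + b)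
    (ht : ∀ s, hingeRisk a b t ≤ hingeRisk a b s) : a * hinge t = b * hinge (-t) := by
  set x := (a * hinge t - b * hinge (-t)) / (a + b)
  have hx : a * hinge t - b * hinge (-t) = (a + b) * x :=
    (mul_div_cancel₀ _ hab.ne').symm
  have h := (ht _).trans (hingeRisk_add_le (t := t) ha hb x)
  rw [hx] at h
  have hx0 : x ^ 2 ≤ 0 := nonpos_of_mul_nonpos_right (by linarith) hab
  have : x = 0 := pow_eq_zero_iff two_ne_zero |>.1 (le_antisymm hx0 (sq_nonneg x))
  rw [this, mul_zero] at hx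
  linarith

lemma isMin_of_hinge_balance (ha : 0 ≤ a) (hb : 0 ≤ b) (h : a * hinge t = b * hinge (-t))
    (s : ℝ) : hingeRisk a b t ≤ hingeRisk a b s := by
  simpa [h] using hingeRisk_sub_le (t := t) ha hb (s - t)

end hingeRisk

lemma lt_of_hinge_balance {a b a' b' t t' : ℝ} (ha : 0 ≤ a) (hb : 0 ≤ b) (ha' : 0 ≤ a')
    (hb' : 0 ≤ b') (h : a * hinge t = b * hinge (-t)) (h' : a' * hinge t' = b' * hinge (-t'))
    (hdet : b * a' < a * b') : t' < t := by
  by_contra! htt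
  have key : (a * b' - b * a') * ((hinge t + hinge (-t)) * (hinge t' + hinge (-t'))) =
      (a + b) * (a' + b') * (hinge t' * hinge (-t) - hinge t * hinge (-t')) := by
    linear_combination (a' + b') * (hinge t' + hinge (-t')) * h -
      (a + b) * (hinge t + hinge (-t)) * h'
  have hcross : hinge t' * hinge (-t) ≤ hinge t * hinge (-t') :=
    mul_le_mul (hinge_antitone htt) (hinge_antitone (neg_le_neg htt)) (hinge_nonneg _)
      (hinge_nonneg _)
  have hpos : 0 < (hinge t + hinge (-t)) * (hinge t' + hinge (-t')) := by
    nlinarith [two_le_hinge_add_hinge_neg t, two_le_hinge_add_hinge_neg t']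
  nlinarith [mul_pos (sub_pos.2 hdet) hpos, mul_nonneg (add_nonneg ha hb) (add_nonneg ha' hb')]

noncomputable def hingeArgmin (a b : ℝ) : ℝ := (a - b) / (a + b)

lemma hinge_balance_hingeArgmin {a b : ℝ} (ha : 0 ≤ a) (hb : 0 ≤ b) (hab : 0 < a + b) :
    a * hinge (hingeArgmin a b) = b * hinge (-hingeArgmin a b) := by
  have h₁ : hinge (hingeArgmin a b) = 2 * b / (a + b) := by
    rw [hinge, hingeArgmin, max_eq_right]
    · field_simp; ring
    · rw [sub_nonneg, div_le_one hab]; linarith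
  have h₂ : hinge (-hingeArgmin a b) = 2 * a / (a + b) := by
    rw [hinge, hingeArgmin, max_eq_right]
    · field_simp; ring
    · rw [sub_nonneg, neg_le, le_div_iff₀ hab]; linarith
  rw [h₁, h₂]; ring

lemma hingeArgmin_lt_hingeArgmin_iff {a b a' b' : ℝ} (hab : 0 < a + b) (hab' : 0 < a' + b') :
    hingeArgmin a' b' < hingeArgmin a b ↔ b * a' < a * b' := by
  rw [hingeArgmin, hingeArgmin, div_lt_div_iff₀ hab' hab]
  constructor <;> intro h <;> linarith

lemma lt_of_isMin_hingeRisk {a b a' b' t t' : ℝ} (ha : 0 ≤ a) (hb : 0 ≤ b) (ha' : 0 ≤ a')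
    (hb' : 0 ≤ b') (hab : 0 < a + b) (hab' : 0 < a' + b')
    (ht : ∀ s, hingeRisk a b t ≤ hingeRisk a b s)
    (ht' : ∀ s, hingeRisk a' b' t' ≤ hingeRisk a' b' s)
    (hopt : hingeArgmin a' b' < hingeArgmin a b) : t' < t :=
  lt_of_hinge_balance ha hb ha' hb' (hinge_balance_of_isMin ha hb hab ht)
    (hinge_balance_of_isMin ha' hb' hab' ht') ((hingeArgmin_lt_hingeArgmin_iff hab hab').1 hopt)

noncomputable def pairLoss (u v : ℝ) : ℝ :=
  (if u < v then 1 else 0) + 1 / 2 * (if u = v then 1 else 0)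

lemma pairLoss_add_pairLoss (u v : ℝ) : pairLoss u v + pairLoss v u = 1 := by
  rcases lt_trichotomy u v with h | rfl | h
  · simp [pairLoss, h, h.not_gt, h.ne, h.ne']
  · norm_num [pairLoss]
  · simp [pairLoss, h, h.not_gt, h.ne, h.ne']

lemma pairLoss_nonneg (u v : ℝ) : 0 ≤ pairLoss u v := by
  unfold pairLoss; positivity

lemma pairLoss_le_one (u v : ℝ) : pairLoss u v ≤ 1 := by
  linarith [pairLoss_add_pairLoss u v, pairLoss_nonneg v u]

lemma pairLoss_of_lt {u v : ℝ} (h : u < v) : pairLoss u v = 1 := by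
  simp [pairLoss, h, h.ne]

lemma pairLoss_of_gt {u v : ℝ} (h : v < u) : pairLoss u v = 0 := by
  simp [pairLoss, h.not_gt, h.ne']

lemma half_le_pairLoss {u v : ℝ} (h : u ≤ v) : 1 / 2 ≤ pairLoss u v := by
  rcases h.lt_or_eq with h | rfl
  · simp [pairLoss, h, h.ne]; norm_num
  · norm_num [pairLoss]

lemma mul_pairLoss_le {e u v u' v' : ℝ} (hpos : 0 < e → v < u) (hneg : e < 0 → u < v) :
    e * pairLoss u v ≤ e * pairLoss u' v' := by
  rcases lt_trichotomy e 0 with he | rfl | he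
  · rw [pairLoss_of_lt (hneg he), mul_one]
    nlinarith [pairLoss_le_one u' v']
  · simp
  · rw [pairLoss_of_gt (hpos he), mul_zero]
    exact mul_nonneg he.le (pairLoss_nonneg _ _)

section LabelWeights

variable {c : ℕ}

lemma phiP_nonneg {β P : (Fin c → Bool) → ℝ} (hβ : ∀ y, 0 ≤ β y) (hP : ∀ y, 0 ≤ P y)
    (j : Fin c) : 0 ≤ phiP β P j :=
  sum_nonneg fun y _ => mul_nonneg (hβ y) (hP y)

lemma phiM_nonneg {β P : (Fin c → Bool) → ℝ} (hβ : ∀ y, 0 ≤ β y) (hP : ∀ y, 0 ≤ P y)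
    (j : Fin c) : 0 ≤ phiM β P j :=
  sum_nonneg fun y _ => mul_nonneg (hβ y) (hP y)

lemma phiP_add_phiM (βp βm P : (Fin c → Bool) → ℝ) (j : Fin c) :
    phiP βp P j + phiM βm P j = ∑ y, (if y j then βp y else βm y) * P y := by
  simp only [phiP, phiM, sum_filter, ← sum_add_distrib]
  refine sum_congr rfl fun y _ => ?_
  cases y j <;> simp

lemma phiP_mul_phiM_sub (β P : (Fin c → Bool) → ℝ) (p q : Fin c) :
    phiP β P p * phiM β P q - phiM β P p * phiP β P q =
      (∑ y, β y * P y) * (phiP β P p - phiP β P q) := by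
  have h := fun j => phiP_add_phiM β β P j
  simp only [ite_self] at h
  rw [eq_sub_of_add_eq' (h p), eq_sub_of_add_eq' (h q)]
  ring

lemma riskU_eq_sum (βp βm : (Fin c → Bool) → ℝ) (ℓ : ℝ → ℝ) (P : (Fin c → Bool) → ℝ)
    (f : Fin c → ℝ) :
    riskU βp βm ℓ P f = ∑ j, (phiP βp P j * ℓ (f j) + phiM βm P j * ℓ (-f j)) := by
  simp only [riskU, Lu, phiP, phiM, sum_filter, mul_sum, sum_mul, ← sum_add_distrib]
  rw [sum_comm]
  refine sum_congr rfl fun j _ => sum_congr rfl fun y _ => ?_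
  cases y j <;> simp [toSign] <;> ring

def phiPM (α P : (Fin c → Bool) → ℝ) (p q : Fin c) : ℝ :=
  ∑ y ∈ univ.filter (fun y : Fin c → Bool => y p = true ∧ y q = false), α y * P y

lemma riskGpr_eq_sum (α P : (Fin c → Bool) → ℝ) (f : Fin c → ℝ) :
    riskGpr α P f = ∑ p, ∑ q, phiPM α P p q * pairLoss (f p) (f q) := by
  have hL (y : Fin c → Bool) :
      Lgpr α f y = α y * ∑ p ∈ Sp y, ∑ q ∈ Sm y, pairLoss (f p) (f q) := rfl
  simp only [riskGpr, hL, Sp, Sm, phiPM, sum_filter, mul_sum, sum_mul, mul_ite, ite_mul,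
    mul_zero, zero_mul, ite_sum_zero, ite_and]
  rw [sum_comm]
  refine sum_congr rfl fun p _ => ?_
  rw [sum_comm]
  refine sum_congr rfl fun q _ => sum_congr rfl fun y _ => ?_
  split_ifs <;> ring

lemma phiPM_sub_phiPM (α P : (Fin c → Bool) → ℝ) (p q : Fin c) :
    phiPM α P p q - phiPM α P q p = phiP α P p - phiP α P q := by
  simp only [phiPM, phiP, sum_filter, ← sum_sub_distrib]
  refine sum_congr rfl fun y _ => ?_
  cases y p <;> cases y q <;> simp

lemma two_mul_riskGpr (α P : (Fin c → Bool) → ℝ) (f : Fin c → ℝ) :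
    2 * riskGpr α P f =
      ∑ p, ∑ q, (phiPM α P q p + (phiP α P p - phiP α P q) * pairLoss (f p) (f q)) := by
  rw [riskGpr_eq_sum, two_mul]
  nth_rewrite 2 [sum_comm]
  simp only [← sum_add_distrib]
  refine sum_congr rfl fun p _ => sum_congr rfl fun q _ => ?_
  linear_combination pairLoss (f p) (f q) * phiPM_sub_phiPM α P p q +
    phiPM α P q p * pairLoss_add_pairLoss (f q) (f p)

lemma forall_riskGpr_le_iff (α P : (Fin c → Bool) → ℝ) (f : Fin c → ℝ) :
    (∀ g, riskGpr α P f ≤ riskGpr α P g) ↔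
      ∀ p q, phiP α P q < phiP α P p → f q < f p := by
  have hterm (g : Fin c → ℝ) (hg : ∀ p q, phiP α P q < phiP α P p → g q < g p)
      (h : Fin c → ℝ) (p q : Fin c) :
      phiPM α P q p + (phiP α P p - phiP α P q) * pairLoss (g p) (g q) ≤
        phiPM α P q p + (phiP α P p - phiP α P q) * pairLoss (h p) (h q) :=
    add_le_add_right (mul_pairLoss_le (fun he => hg p q (sub_pos.1 he))
      (fun he => hg q p (sub_neg.1 he))) _
  constructor
  · intro hf p q hpq
    by_contra! hqp
    have hlt : 2 * riskGpr α P (phiP α P) < 2 * riskGpr α P f := by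
      have hΔ := hterm (phiP α P) (fun _ _ => id) f
      rw [two_mul_riskGpr, two_mul_riskGpr]
      refine sum_lt_sum (fun p' _ => sum_le_sum fun q' _ => hΔ p' q')
        ⟨p, mem_univ p, sum_lt_sum (fun q' _ => hΔ p q') ⟨q, mem_univ q, ?_⟩⟩
      rw [pairLoss_of_gt hpq, mul_zero, add_lt_add_iff_left]
      nlinarith [half_le_pairLoss hqp]
    linarith [hf (phiP α P)]
  · intro hf g
    have h := sum_le_sum fun p (_ : p ∈ univ) =>
      sum_le_sum fun q (_ : q ∈ univ) => hterm f hf g p q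
    rw [← two_mul_riskGpr, ← two_mul_riskGpr] at h
    linarith

lemma condition_iff_hingeArgmin_lt {α βp βm P : (Fin c → Bool) → ℝ}
    (hT : 0 < ∑ y, α y * P y) (hab : ∀ j, 0 < phiP βp P j + phiM βm P j) :
    (∀ p q : Fin c, p < q →
        (0 < phiP α P p * phiM α P q - phiM α P p * phiP α P q →
          0 < phiP βp P p * phiM βm P q - phiM βm P p * phiP βp P q) ∧
        (phiP α P p * phiM α P q - phiM α P p * phiP α P q < 0 →
          phiP βp P p * phiM βm P q - phiM βm P p * phiP βp P q < 0)) ↔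
      ∀ p q, phiP α P q < phiP α P p →
        hingeArgmin (phiP βp P q) (phiM βm P q) < hingeArgmin (phiP βp P p) (phiM βm P p) := by
  have hΔ (p q : Fin c) :
      0 < phiP α P p * phiM α P q - phiM α P p * phiP α P q ↔ phiP α P q < phiP α P p := by
    rw [phiP_mul_phiM_sub, mul_pos_iff_of_pos_left hT, sub_pos]
  have hφ (p q : Fin c) : 0 < phiP βp P p * phiM βm P q - phiM βm P p * phiP βp P q ↔
      hingeArgmin (phiP βp P q) (phiM βm P q) < hingeArgmin (phiP βp P p) (phiM βm P p) := by
    rw [hingeArgmin_lt_hingeArgmin_iff (hab p) (hab q), sub_pos, mul_comm (phiM βm P p)]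
  have hswap (β γ : (Fin c → Bool) → ℝ) (p q : Fin c) :
      phiP β P p * phiM γ P q - phiM γ P p * phiP β P q < 0 ↔
        0 < phiP β P q * phiM γ P p - phiM γ P q * phiP β P p := by
    rw [← neg_pos]; ring_nf
  constructor
  · intro h p q hpq
    rcases lt_trichotomy p q with hlt | rfl | hlt
    · exact (hφ p q).1 ((h p q hlt).1 ((hΔ p q).2 hpq))
    · exact absurd hpq (lt_irrefl _)
    · exact (hφ p q).1 ((hswap _ _ q p).1
        ((h q p hlt).2 ((hswap _ _ q p).2 ((hΔ p q).2 hpq))))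
  · intro h p q _
    rw [hswap, hswap]
    exact ⟨fun hd => (hφ p q).2 (h p q ((hΔ p q).1 hd)),
      fun hd => (hφ q p).2 (h q p ((hΔ q p).1 hd))⟩

end LabelWeights

theorem stmt13_general (c : ℕ)
    (α βp βm : (Fin c → Bool) → ℝ)
    (hα : ∀ y, 0 < α y) (hβp : ∀ y, 0 < βp y) (hβm : ∀ y, 0 < βm y) :
    (∀ P : (Fin c → Bool) → ℝ, (∀ y, 0 ≤ P y) → (∑ y, P y) = 1 →
        ∀ p q : Fin c, p < q →
          (0 < phiP α P p * phiM α P q - phiM α P p * phiP α P q →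
            0 < phiP βp P p * phiM βm P q - phiM βm P p * phiP βp P q) ∧
          (phiP α P p * phiM α P q - phiM α P p * phiP α P q < 0 →
            phiP βp P p * phiM βm P q - phiM βm P p * phiP βp P q < 0)) ↔
      (∀ P : (Fin c → Bool) → ℝ, (∀ y, 0 ≤ P y) → (∑ y, P y) = 1 →
        ∀ f : Fin c → ℝ,
          (∀ g : Fin c → ℝ,
              riskU βp βm (fun z => (max 0 (1 - z)) ^ 2) P f ≤
                riskU βp βm (fun z => (max 0 (1 - z)) ^ 2) P g) →
            ∀ g : Fin c → ℝ, riskGpr α P f ≤ riskGpr α P g) := by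
  refine forall₃_congr fun P hP hP₁ => ?_
  have ha := phiP_nonneg (fun y => (hβp y).le) hP
  have hb := phiM_nonneg (fun y => (hβm y).le) hP
  have hab (j : Fin c) : 0 < phiP βp P j + phiM βm P j := by
    rw [phiP_add_phiM]
    exact sum_mul_pos (fun y => by cases y j <;> simp [hβp, hβm]) hP hP₁
  have hU (f : Fin c → ℝ) : riskU βp βm (fun z => (max 0 (1 - z)) ^ 2) P f =
      ∑ j, hingeRisk (phiP βp P j) (phiM βm P j) (f j) := riskU_eq_sum _ _ _ _ _
  rw [condition_iff_hingeArgmin_lt (sum_mul_pos hα hP hP₁) hab]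
  constructor
  · intro hC f hf
    simp only [hU, forall_sum_apply_le_iff] at hf
    rw [forall_riskGpr_le_iff]
    exact fun p q hpq => lt_of_isMin_hingeRisk (ha p) (hb p) (ha q) (hb q) (hab p) (hab q)
      (hf p) (hf q) (hC p q hpq)
  · refine fun h => (forall_riskGpr_le_iff α P _).1 (h _ ?_)
    simp only [hU, forall_sum_apply_le_iff]
    exact fun j => isMin_of_hinge_balance (ha j) (hb j)
      (hinge_balance_hingeArgmin (ha j) (hb j) (hab j))

theorem stmt13 (c : ℕ) (hc : 2 ≤ c)
    (α βp βm : (Fin c → Bool) → ℝ)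
    (hα : ∀ y, 0 < α y) (hβp : ∀ y, 0 < βp y) (hβm : ∀ y, 0 < βm y) :
    (∀ P : (Fin c → Bool) → ℝ, (∀ y, 0 ≤ P y) → (∑ y, P y) = 1 →
        ∀ p q : Fin c, p < q →
          (0 < phiP α P p * phiM α P q - phiM α P p * phiP α P q →
            0 < phiP βp P p * phiM βm P q - phiM βm P p * phiP βp P q) ∧
          (phiP α P p * phiM α P q - phiM α P p * phiP α P q < 0 →
            phiP βp P p * phiM βm P q - phiM βm P p * phiP βp P q < 0)) ↔
      (∀ P : (Fin c → Bool) → ℝ, (∀ y, 0 ≤ P y) → (∑ y, P y) = 1 →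
        ∀ f : Fin c → ℝ,
          (∀ g : Fin c → ℝ,
              riskU βp βm (fun z => (max 0 (1 - z)) ^ 2) P f ≤
                riskU βp βm (fun z => (max 0 (1 - z)) ^ 2) P g) →
            ∀ g : Fin c → ℝ, riskGpr α P f ≤ riskGpr α P g) :=
  stmt13_general c α βp βm hα hβp hβm
end

section
/- Let c ≥ 4. For nontrivial y ∈ {−1,+1}^c set α(y) = 1/(|S_y^+|·|S_y^-|) and β⁺(y) = β⁻(y) = 1/c (the penalties of the univariate loss L_{u1} and of the partial ranking loss). Then there is no τ > 0 such that β⁺(y)·β⁻(y) = τ·α(y)² for all nontrivial y ∈ {−1,+1}^c. -/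
open scoped BigOperators

lemma card_Sp_add_card_Sm {c : ℕ} (y : Fin c → Bool) : (Sp y).card + (Sm y).card = c := by
  have hSm : Sm y = Finset.univ.filter (fun j => ¬ y j = true) := by
    simp only [Sm, Bool.not_eq_true]
  rw [Sp, hSm, Finset.card_filter_add_card_filter_not, Finset.card_univ, Fintype.card_fin]

lemma exists_card_Sp_eq {c k : ℕ} (hk : k ≤ c) :
    ∃ y : Fin c → Bool, (Sp y).card = k ∧ (Sm y).card = c - k := by
  let y : Fin c → Bool := fun j => decide ((j : ℕ) < k)
  have hSp : (Sp y).card = k := by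
    have : Sp y = (Finset.range k).attachFin (fun _ hj => (Finset.mem_range.1 hj).trans_le hk) := by
      ext j
      simp [Sp, y]
    rw [this, Finset.card_attachFin, Finset.card_range]
  refine ⟨y, hSp, ?_⟩
  have := card_Sp_add_card_Sm y
  omega

-- The left side is the nonzero constant `1/c²`, so `τ ≠ 0` and can be cancelled.
lemma card_mul_card_eq_of_forall_eq {c : ℕ} (hc : 0 < c) {τ : ℝ}
    (h : ∀ y : Fin c → Bool, (Sp y).Nonempty → (Sm y).Nonempty →
      (1 / (c : ℝ)) * (1 / (c : ℝ)) = τ * (1 / (((Sp y).card : ℝ) * ((Sm y).card : ℝ))) ^ 2)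
    {y y' : Fin c → Bool} (hyp : (Sp y).Nonempty) (hym : (Sm y).Nonempty)
    (hyp' : (Sp y').Nonempty) (hym' : (Sm y').Nonempty) :
    (Sp y).card * (Sm y).card = (Sp y').card * (Sm y').card := by
  have hy := h y hyp hym
  have hy' := h y' hyp' hym'
  have hc' : (1 / (c : ℝ)) * (1 / (c : ℝ)) ≠ 0 := by positivity
  have hτ : τ ≠ 0 := by rintro rfl; simp_all
  have hsq : (1 / (((Sp y).card : ℝ) * ((Sm y).card : ℝ))) ^ 2
      = (1 / (((Sp y').card : ℝ) * ((Sm y').card : ℝ))) ^ 2 :=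
    mul_left_cancel₀ hτ (hy.symm.trans hy')
  have hinv := (pow_left_inj₀ (by positivity) (by positivity) two_ne_zero).1 hsq
  simp only [one_div, inv_inj] at hinv
  exact_mod_cast hinv

theorem stmt14 (c : ℕ) (hc : 4 ≤ c) :
    ¬ ∃ τ : ℝ, 0 < τ ∧ ∀ y : Fin c → Bool,
      (Sp y).Nonempty → (Sm y).Nonempty →
        (1 / (c : ℝ)) * (1 / (c : ℝ)) =
          τ * (1 / (((Sp y).card : ℝ) * ((Sm y).card : ℝ))) ^ 2 := by
  rintro ⟨τ, -, h⟩
  obtain ⟨y₁, hp₁, hm₁⟩ := exists_card_Sp_eq (c := c) (k := 1) (by omega)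
  obtain ⟨y₂, hp₂, hm₂⟩ := exists_card_Sp_eq (c := c) (k := 2) (by omega)
  have nonempty {s : Finset (Fin c)} {k : ℕ} (hs : s.card = k) (hk : 0 < k) : s.Nonempty :=
    Finset.card_pos.1 (hs ▸ hk)
  have key := card_mul_card_eq_of_forall_eq (by omega) h
    (nonempty hp₁ one_pos) (nonempty hm₁ (by omega)) (nonempty hp₂ two_pos) (nonempty hm₂ (by omega))
  rw [hp₁, hm₁, hp₂, hm₂] at key
  omega
end

section
/- Let c ≥ 4. For nontrivial y ∈ {−1,+1}^c set α(y) = 1/(|S_y^+|·|S_y^-|), β⁺(y) = 1/|S_y^+| and β⁻(y) = 1/|S_y^-| (the penalties of the reweighted univariate loss L_{u3} and of the partial ranking loss). Then there is no τ > 0 such that β⁺(y)·β⁻(y) = τ·α(y)² for all nontrivial y ∈ {−1,+1}^c. -/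
open scoped BigOperators

/-! The identity `β⁺ β⁻ = τ α²` holds at `y` exactly when `τ = |S_y^+| |S_y^-|`, but this product
is `c - 1` when `y` has one positive label and `2 (c - 2)` when it has two; these differ unless
`c = 3`. -/

lemma one_div_mul_one_div_eq_mul_one_div_sq_iff {p m τ : ℝ} (hp : p ≠ 0) (hm : m ≠ 0) :
    1 / p * (1 / m) = τ * (1 / (p * m)) ^ 2 ↔ τ = p * m := by
  field_simp
  constructor <;> intro h <;> linarith

lemma Sp_lt {c : ℕ} (b : Fin c) : Sp (fun j => decide (j < b)) = Finset.Iio b := by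
  ext j; simp [Sp]

lemma Sm_lt {c : ℕ} (b : Fin c) : Sm (fun j => decide (j < b)) = Finset.Ici b := by
  ext j; simp [Sm]

lemma Sp_lt_nonempty {c : ℕ} {b : Fin c} (hb : 0 < (b : ℕ)) :
    (Sp fun j => decide (j < b)).Nonempty := by
  rw [Sp_lt]
  exact ⟨⟨0, hb.trans b.isLt⟩, Finset.mem_Iio.mpr (Fin.mk_lt_of_lt_val hb)⟩

lemma Sm_lt_nonempty {c : ℕ} (b : Fin c) : (Sm fun j => decide (j < b)).Nonempty := by
  rw [Sm_lt]
  exact ⟨b, Finset.mem_Ici.mpr le_rfl⟩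

lemma card_Sp_mul_card_Sm_lt {c : ℕ} (b : Fin c) :
    (Sp fun j => decide (j < b)).card * (Sm fun j => decide (j < b)).card = b * (c - b) := by
  rw [Sp_lt, Sm_lt, Fin.card_Iio, Fin.card_Ici]

theorem stmt15 (c : ℕ) (hc : 4 ≤ c) :
    ¬ ∃ τ : ℝ, 0 < τ ∧ ∀ y : Fin c → Bool,
      (Sp y).Nonempty → (Sm y).Nonempty →
        (1 / ((Sp y).card : ℝ)) * (1 / ((Sm y).card : ℝ)) =
          τ * (1 / (((Sp y).card : ℝ) * ((Sm y).card : ℝ))) ^ 2 := by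
  rintro ⟨τ, -, h⟩
  have τ_eq : ∀ b : Fin c, 0 < (b : ℕ) → τ = (b * (c - b) : ℕ) := by
    intro b hb
    have hp := Sp_lt_nonempty hb
    have hm := Sm_lt_nonempty b
    rw [← card_Sp_mul_card_Sm_lt, Nat.cast_mul, ← one_div_mul_one_div_eq_mul_one_div_sq_iff
      (Nat.cast_ne_zero.mpr hp.card_pos.ne') (Nat.cast_ne_zero.mpr hm.card_pos.ne')]
    exact h _ hp hm
  have h1 := τ_eq ⟨1, by omega⟩ Nat.one_pos
  have h2 := τ_eq ⟨2, by omega⟩ Nat.two_pos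
  have : 1 * (c - 1) = 2 * (c - 2) := by exact_mod_cast h1.symm.trans h2
  omega
end

section
/- Let c ≥ 4. For nontrivial y ∈ {−1,+1}^c set α(y) = 1/(|S_y^+|·|S_y^-|) and β⁺(y) = β⁻(y) = 1/min{|S_y^+|,|S_y^-|} (the penalties of the reweighted univariate loss L_{u4} and of the partial ranking loss). Then there is no τ > 0 such that β⁺(y)·β⁻(y) = τ·α(y)² for all nontrivial y ∈ {−1,+1}^c. -/
/-
For `p = |S⁺| ≤ q = |S⁻|` the identity `β⁺β⁻ = τ α²` reads `1/p² = τ/(p q)²`, i.e. `τ = q²`.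
The labelings with one and with two positive coordinates (the second still has `p ≤ q` once
`c ≥ 4`) therefore force `(c - 1)² = τ = (c - 2)²`, which is absurd.
-/

open scoped BigOperators

lemma Sm_eq_compl_Sp {c : ℕ} (y : Fin c → Bool) : Sm y = (Sp y)ᶜ := by
  ext j
  simp [Sp, Sm]

lemma card_Sm {c : ℕ} (y : Fin c → Bool) : (Sm y).card = c - (Sp y).card := by
  rw [Sm_eq_compl_Sp, Finset.card_compl, Fintype.card_fin]

def firstPositive (c k : ℕ) : Fin c → Bool := fun j => decide (j.val < k)

lemma card_Sp_firstPositive {c k : ℕ} (hk : k ≤ c) : (Sp (firstPositive c k)).card = k := by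
  simp [Sp, firstPositive, Fin.card_filter_val_lt, hk]

lemma card_Sm_firstPositive {c k : ℕ} (hk : k ≤ c) :
    (Sm (firstPositive c k)).card = c - k := by
  rw [card_Sm, card_Sp_firstPositive hk]

lemma inv_sq_eq_mul_inv_mul_sq_iff {p q τ : ℝ} (hp : p ≠ 0) (hq : 0 < q) :
    1 / p * (1 / p) = τ * (1 / (p * q)) ^ 2 ↔ τ = q ^ 2 := by
  field_simp
  constructor <;> intro h <;> linarith

lemma eq_sq_of_firstPositive {c k : ℕ} {τ : ℝ} (hk : 0 < k) (hkc : 2 * k ≤ c)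
    (H : (1 / ((min (Sp (firstPositive c k)).card (Sm (firstPositive c k)).card : ℕ) : ℝ)) *
        (1 / ((min (Sp (firstPositive c k)).card (Sm (firstPositive c k)).card : ℕ) : ℝ)) =
      τ * (1 / (((Sp (firstPositive c k)).card : ℝ) *
        ((Sm (firstPositive c k)).card : ℝ))) ^ 2) :
    τ = ((c : ℝ) - k) ^ 2 := by
  rw [card_Sp_firstPositive (by omega), card_Sm_firstPositive (by omega),
    min_eq_left (by omega), Nat.cast_sub (by omega)] at H
  refine (inv_sq_eq_mul_inv_mul_sq_iff (by positivity) ?_).mp H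
  have : (2 * k : ℝ) ≤ c := by exact_mod_cast hkc
  have : (0 : ℝ) < k := by exact_mod_cast hk
  linarith

theorem stmt16 (c : ℕ) (hc : 4 ≤ c) :
    ¬ ∃ τ : ℝ, 0 < τ ∧ ∀ y : Fin c → Bool,
      (Sp y).Nonempty → (Sm y).Nonempty →
        (1 / ((min (Sp y).card (Sm y).card : ℕ) : ℝ)) *
            (1 / ((min (Sp y).card (Sm y).card : ℕ) : ℝ)) =
          τ * (1 / (((Sp y).card : ℝ) * ((Sm y).card : ℝ))) ^ 2 := by
  rintro ⟨τ, -, H⟩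
  have nonempty_Sp {k : ℕ} (hk : 0 < k) (hkc : k < c) : (Sp (firstPositive c k)).Nonempty :=
    Finset.card_pos.mp (by rw [card_Sp_firstPositive hkc.le]; exact hk)
  have nonempty_Sm {k : ℕ} (hkc : k < c) : (Sm (firstPositive c k)).Nonempty :=
    Finset.card_pos.mp (by rw [card_Sm_firstPositive hkc.le]; omega)
  have h1 := eq_sq_of_firstPositive (k := 1) one_pos (by omega)
    (H _ (nonempty_Sp one_pos (by omega)) (nonempty_Sm (by omega)))
  have h2 := eq_sq_of_firstPositive (k := 2) two_pos (by omega)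
    (H _ (nonempty_Sp two_pos (by omega)) (nonempty_Sm (by omega)))
  have hcR : (4 : ℝ) ≤ c := by exact_mod_cast hc
  push_cast at h1 h2
  nlinarith
end
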